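/- For every positive integer d, the number of subgroups of ℤ × ℤ of index d equals σ(d). -/

import Mathlib

/-!
Every subgroup of finite index of `ℤ × ℤ` has a unique basis in Hermite normal form
`(a, 0), (b, c)` with `0 ≤ b < a` and `0 < c`, and its index is the determinant `a * c`.
The subgroups of index `d` therefore correspond to the pairs `(a, b)` with `a ∣ d` and
`0 ≤ b < a`, of which there are `σ(d)`.
-/

open AddSubgroup

theorem LinearMap.index_range_eq_natAbs_det {M : Type*} [AddCommGroup M] [Module.Free ℤ M]
    [Module.Finite ℤ M] (f : M →ₗ[ℤ] M) (hf : Function.Injective f) :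
    (LinearMap.range f).toAddSubgroup.index = (LinearMap.det f).natAbs :=
  (Submodule.natAbs_det_equiv _ (LinearEquiv.ofInjective f hf)).symm.trans (by congr)

theorem Int.exists_natCast_zmultiples_eq (H : AddSubgroup ℤ) :
    ∃ n : ℕ, zmultiples (n : ℤ) = H := by
  obtain ⟨a, rfl⟩ := Int.subgroup_cyclic H
  exact ⟨a.natAbs, by rw [Int.zmultiples_natAbs, zmultiples_eq_closure]⟩

noncomputable def hermiteMap (a b c : ℤ) : ℤ × ℤ →ₗ[ℤ] ℤ × ℤ :=
  Matrix.toLin (Module.Basis.finTwoProd ℤ) (Module.Basis.finTwoProd ℤ) !![a, b; 0, c]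

noncomputable def hermiteLattice (a b c : ℤ) : AddSubgroup (ℤ × ℤ) :=
  (LinearMap.range (hermiteMap a b c)).toAddSubgroup

section HermiteLattice

variable {a b c : ℤ}

theorem hermiteMap_apply (a b c m n : ℤ) :
    hermiteMap a b c (m, n) = (a * m + b * n, c * n) := by
  ext <;> simp [hermiteMap, Matrix.toLin_apply] <;> ring

theorem det_hermiteMap (a b c : ℤ) : LinearMap.det (hermiteMap a b c) = a * c := by
  simp [hermiteMap, LinearMap.det_toLin]

theorem hermiteMap_injective (ha : a ≠ 0) (hc : c ≠ 0) :
    Function.Injective (hermiteMap a b c) := by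
  rintro ⟨m, n⟩ ⟨m', n'⟩ h
  simp only [hermiteMap_apply, Prod.mk.injEq] at h
  obtain rfl : n = n' := mul_left_cancel₀ hc h.2
  obtain rfl : m = m' := mul_left_cancel₀ ha (add_right_cancel h.1)
  rfl

theorem index_hermiteLattice (ha : a ≠ 0) (hc : c ≠ 0) :
    (hermiteLattice a b c).index = (a * c).natAbs := by
  rw [hermiteLattice, LinearMap.index_range_eq_natAbs_det _ (hermiteMap_injective ha hc),
    det_hermiteMap]

theorem mem_hermiteLattice {p : ℤ × ℤ} :
    p ∈ hermiteLattice a b c ↔ ∃ m n : ℤ, a * m + b * n = p.1 ∧ c * n = p.2 := by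
  simp only [hermiteLattice, Submodule.mem_toAddSubgroup, LinearMap.mem_range, Prod.exists,
    hermiteMap_apply, Prod.ext_iff]

theorem mk_zero_mem_hermiteLattice : (a, 0) ∈ hermiteLattice a b c :=
  mem_hermiteLattice.2 ⟨1, 0, by ring, by ring⟩

theorem mk_mem_hermiteLattice : (b, c) ∈ hermiteLattice a b c :=
  mem_hermiteLattice.2 ⟨0, 1, by ring, by ring⟩

theorem dvd_snd_of_mem_hermiteLattice {p : ℤ × ℤ} (hp : p ∈ hermiteLattice a b c) : c ∣ p.2 := by
  obtain ⟨m, n, -, h⟩ := mem_hermiteLattice.1 hp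
  exact ⟨n, h.symm⟩

theorem dvd_of_mk_zero_mem_hermiteLattice (hc : c ≠ 0) {x : ℤ}
    (hx : (x, 0) ∈ hermiteLattice a b c) : a ∣ x := by
  obtain ⟨m, n, h₁, h₂⟩ := mem_hermiteLattice.1 hx
  obtain rfl : n = 0 := (mul_eq_zero.1 h₂).resolve_left hc
  exact ⟨m, by simpa using h₁.symm⟩

theorem dvd_sub_of_mk_mem_hermiteLattice (hc : c ≠ 0) {x : ℤ}
    (hx : (x, c) ∈ hermiteLattice a b c) : a ∣ x - b := by
  obtain ⟨m, n, h₁, h₂⟩ := mem_hermiteLattice.1 hx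
  obtain rfl : n = 1 := mul_left_cancel₀ hc (h₂.trans (mul_one c).symm)
  exact ⟨m, by simp only at h₁; linarith⟩

theorem eq_of_hermiteLattice_eq {a' b' c' : ℤ} (ha : 0 < a) (ha' : 0 < a') (hb : 0 ≤ b)
    (hb' : 0 ≤ b') (hba : b < a) (hba' : b' < a') (hc : 0 < c) (hc' : 0 < c')
    (h : hermiteLattice a b c = hermiteLattice a' b' c') : a = a' ∧ b = b' ∧ c = c' := by
  have hbc : (b, c) ∈ hermiteLattice a' b' c' := h ▸ mk_mem_hermiteLattice
  have hbc' : (b', c') ∈ hermiteLattice a b c := h ▸ mk_mem_hermiteLattice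
  obtain rfl : c = c' := Int.dvd_antisymm hc.le hc'.le
    (dvd_snd_of_mem_hermiteLattice hbc') (dvd_snd_of_mem_hermiteLattice hbc)
  have ha0 : (a, 0) ∈ hermiteLattice a' b' c := h ▸ mk_zero_mem_hermiteLattice
  have ha0' : (a', 0) ∈ hermiteLattice a b c := h ▸ mk_zero_mem_hermiteLattice
  obtain rfl : a = a' := Int.dvd_antisymm ha.le ha'.le
    (dvd_of_mk_zero_mem_hermiteLattice hc.ne' ha0') (dvd_of_mk_zero_mem_hermiteLattice hc.ne' ha0)
  have hdvd := dvd_sub_of_mk_mem_hermiteLattice hc.ne' hbc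
  exact ⟨rfl, sub_eq_zero.1 (Int.eq_zero_of_abs_lt_dvd hdvd
    (abs_sub_lt_of_nonneg_of_lt hb hba hb' hba')), rfl⟩

theorem hermiteLattice_eq_of_comap_inl_of_map_snd {L : AddSubgroup (ℤ × ℤ)}
    (hA : zmultiples a = L.comap (AddMonoidHom.inl ℤ ℤ))
    (hC : zmultiples c = L.map (AddMonoidHom.snd ℤ ℤ)) (hbc : (b, c) ∈ L) :
    hermiteLattice a b c = L := by
  have ha : (a, (0 : ℤ)) ∈ L := (hA ▸ mem_zmultiples a : a ∈ L.comap (AddMonoidHom.inl ℤ ℤ))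
  ext ⟨x, y⟩
  rw [mem_hermiteLattice]
  constructor
  · rintro ⟨m, n, rfl, rfl⟩
    have : (a * m + b * n, c * n) = m • (a, (0 : ℤ)) + n • (b, c) := by
      ext <;> simp [mul_comm]
    exact this ▸ add_mem (zsmul_mem ha m) (zsmul_mem hbc n)
  · intro hxy
    obtain ⟨n, rfl⟩ : c ∣ y := Int.mem_zmultiples_iff.1 (hC ▸ ⟨(x, y), hxy, rfl⟩)
    have hx : (x - b * n, (0 : ℤ)) ∈ L := by
      have : (x - b * n, (0 : ℤ)) = (x, c * n) - n • (b, c) := by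
        ext <;> simp [mul_comm]
      exact this ▸ sub_mem hxy (zsmul_mem hbc n)
    obtain ⟨m, hm⟩ := Int.mem_zmultiples_iff.1 (hA ▸ hx : x - b * n ∈ zmultiples a)
    exact ⟨m, n, by linarith, rfl⟩

end HermiteLattice

/-- Hermite normal form for subgroups of finite index: the second projection of `L` is `cℤ`,
its intersection with the first axis is `aℤ × 0`, and `b` is the first coordinate of an
element `(x, c) ∈ L` reduced mod `a`. -/
theorem exists_hermiteLattice_eq {L : AddSubgroup (ℤ × ℤ)} (hL : L.index ≠ 0) :
    ∃ a b c : ℕ, b < a ∧ 0 < c ∧ hermiteLattice a b c = L := by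
  obtain ⟨a, hA⟩ := Int.exists_natCast_zmultiples_eq (L.comap (AddMonoidHom.inl ℤ ℤ))
  obtain ⟨c, hC⟩ := Int.exists_natCast_zmultiples_eq (L.map (AddMonoidHom.snd ℤ ℤ))
  have hdA : (L.index : ℤ) ∈ zmultiples (a : ℤ) := by
    simpa [hA] using L.nsmul_index_mem (1, 0)
  have hdC : (L.index : ℤ) ∈ zmultiples (c : ℤ) := by
    rw [hC]; exact ⟨L.index • (0, 1), L.nsmul_index_mem _, by simp⟩
  have ha : 0 < a := Nat.pos_of_ne_zero fun h ↦ hL (by simpa [h] using hdA)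
  have hc : 0 < c := Nat.pos_of_ne_zero fun h ↦ hL (by simpa [h] using hdC)
  obtain ⟨⟨x, _⟩, hxc, rfl⟩ : (c : ℤ) ∈ L.map (AddMonoidHom.snd ℤ ℤ) := hC ▸ mem_zmultiples _
  obtain ⟨b, hb⟩ := Int.eq_ofNat_of_zero_le (Int.emod_nonneg x (Int.natCast_ne_zero.2 ha.ne'))
  have hba : b < a := by
    have := Int.emod_lt_of_pos x (Int.natCast_pos.2 ha)
    omega
  have hbc : ((b : ℤ), (c : ℤ)) ∈ L := by
    have ha0 : ((a : ℤ), (0 : ℤ)) ∈ L :=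
      (hA ▸ mem_zmultiples _ : (a : ℤ) ∈ L.comap (AddMonoidHom.inl ℤ ℤ))
    have : ((b : ℤ), (c : ℤ)) = (x, (c : ℤ)) - (x / a) • ((a : ℤ), (0 : ℤ)) := by
      ext <;> simp [← hb, Int.emod_def, mul_comm]
    exact this ▸ sub_mem hxc (zsmul_mem ha0 _)
  exact ⟨a, b, c, hba, hc, hermiteLattice_eq_of_comap_inl_of_map_snd hA hC hbc⟩

theorem index_hermiteLattice_natCast {a c : ℕ} (ha : a ≠ 0) (hc : c ≠ 0) (b : ℤ) :
    (hermiteLattice a b c).index = a * c := by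
  rw [index_hermiteLattice (by exact_mod_cast ha) (by exact_mod_cast hc)]
  exact Int.natAbs_natCast (a * c)

noncomputable def hermiteLatticeOfIndex (d : ℕ) (p : Σ a : d.divisors, Fin a) :
    {L : AddSubgroup (ℤ × ℤ) // L.index = d} :=
  ⟨hermiteLattice p.1 p.2 (d / p.1 : ℕ), by
    obtain ⟨hdvd, hd⟩ := Nat.mem_divisors.1 p.1.2
    rw [index_hermiteLattice_natCast (ne_zero_of_dvd_ne_zero hd hdvd)
      (Nat.div_ne_zero_iff_of_dvd hdvd |>.2 ⟨hd, ne_zero_of_dvd_ne_zero hd hdvd⟩),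
      Nat.mul_div_cancel' hdvd]⟩

theorem hermiteLatticeOfIndex_bijective {d : ℕ} (hd : d ≠ 0) :
    Function.Bijective (hermiteLatticeOfIndex d) := by
  refine ⟨?_, ?_⟩
  · rintro ⟨⟨a, ha⟩, b⟩ ⟨⟨a', ha'⟩, b'⟩ h
    have hpos {k : ℕ} (hk : k ∈ d.divisors) : 0 < k ∧ 0 < d / k :=
      ⟨Nat.pos_of_mem_divisors hk, Nat.div_pos (Nat.divisor_le hk) (Nat.pos_of_mem_divisors hk)⟩
    obtain ⟨haa', hbb', -⟩ := eq_of_hermiteLattice_eq (by exact_mod_cast (hpos ha).1)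
      (by exact_mod_cast (hpos ha').1) (Int.natCast_nonneg b) (Int.natCast_nonneg b')
      (by exact_mod_cast b.2) (by exact_mod_cast b'.2) (by exact_mod_cast (hpos ha).2)
      (by exact_mod_cast (hpos ha').2) (congrArg Subtype.val h)
    obtain rfl : a = a' := by simpa using haa'
    obtain rfl : b = b' := Fin.ext (by simpa using hbb')
    rfl
  · rintro ⟨L, hL⟩
    obtain ⟨a, b, c, hba, hc, rfl⟩ := exists_hermiteLattice_eq (hL ▸ hd)
    rw [index_hermiteLattice_natCast (by omega) hc.ne'] at hL
    subst hL
    refine ⟨⟨⟨a, Nat.mem_divisors.2 ⟨dvd_mul_right a c, hd⟩⟩, ⟨b, hba⟩⟩, ?_⟩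
    simp [hermiteLatticeOfIndex, Nat.mul_div_cancel_left c (by omega : 0 < a)]

/-- For every positive integer `d`, the number of subgroups of `ℤ × ℤ` of index `d`
equals `σ(d)`. -/
theorem stmt2 (d : ℕ) (hd : 0 < d) :
    Nat.card {L : AddSubgroup (ℤ × ℤ) // L.index = d} = ∑ k ∈ d.divisors, k := by
  rw [← Nat.card_congr (Equiv.ofBijective _ (hermiteLatticeOfIndex_bijective hd.ne')),
    Nat.card_sigma]
  simpa using Finset.sum_attach d.divisors id
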